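/- For any f ∈ F with Burge code ω = Ω(f): (1) the length ℓ(f) equals the number of occurrences of the letter b in ω; (2) |f| equals the major index maj(ω) = Σ_{i ∈ Des(ω)} i; (3) the 2-measure μ₂(f) equals the number of descents des(ω), i.e., the number of occurrences of the substring ba in ω. -/

import Mathlib

/-!
For `q ≥ 1` one has `∂f q = f q - [q ∈ R(f)] + [q + 1 ∈ R(f)]`: demotion lowers every part in
`R(f)` by one, and the parts equal to `1` disappear. Hence `ℓ(∂f) = ℓ(f) - [1 ∈ R(f)]` and
`|∂f| = |f| - μ₂(f)`. Comparing `R(f)` with `R(∂f)` through the characterisation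
`q ∈ R(f) ↔ f q ≠ 0 ∧ q + 1 ∉ R(f)`, the parts `q + 1 ∈ R(f) \ R(∂f)` correspond to the parts
`q ∈ R(∂f) \ R(f)`, so `μ₂(∂f) = μ₂(f) - [1 ∈ R(f), 1 ∉ R(∂f)]`, the bracket being the
indicator of a descent at the front of `Ω(f) = [1 ∈ R(f)] · Ω(∂f)`. Prepending a letter shifts
every descent of `Ω(∂f)` by one, so `maj` grows by `des(Ω(∂f)) = μ₂(∂f)`, and the three
identities follow by induction along the chain `f, ∂f, ∂²f, …`, which ends at `0` because
`|f|` strictly decreases.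
-/

open scoped Classical

noncomputable section

/-- `f` is a frequency sequence: `f 0 = 0` and finite support. -/
def IsFreq (f : ℕ → ℕ) : Prop := f 0 = 0 ∧ (Function.support f).Finite

/-- size `|f| = ∑ i·f i`. -/
def fsize (f : ℕ → ℕ) : ℕ := ∑ᶠ n, n * f n

/-- length `ℓ(f) = ∑ f i`. -/
def flen (f : ℕ → ℕ) : ℕ := ∑ᶠ n, f n

/-- the support `S(f)`. -/
def suppF (f : ℕ → ℕ) : Set ℕ := {i | 1 ≤ i ∧ f i ≠ 0}

/-- `[i,j]` is a spread of `f`: a maximal interval contained in the support. -/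
def IsSpread (f : ℕ → ℕ) (i j : ℕ) : Prop :=
  1 ≤ i ∧ i ≤ j ∧ (∀ k, i ≤ k → k ≤ j → f k ≠ 0) ∧ (i = 1 ∨ f (i - 1) = 0) ∧ f (j + 1) = 0

/-- `L(f)`: every other element of each spread, starting from the left end. -/
def Lset (f : ℕ → ℕ) : Set ℕ :=
  {q | ∃ i j, IsSpread f i j ∧ i ≤ q ∧ q ≤ j ∧ (q - i) % 2 = 0}

/-- `R(f)`: every other element of each spread, starting from the right end. -/
def Rset (f : ℕ → ℕ) : Set ℕ :=
  {q | ∃ i j, IsSpread f i j ∧ i ≤ q ∧ q ≤ j ∧ (j - q) % 2 = 0}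

/-- the 2-measure, as the cardinality of `R(f)`. -/
def mu2 (f : ℕ → ℕ) : ℕ := (Rset f).ncard

/-- The Burge demotion operator `∂`. -/
def dB (f : ℕ → ℕ) : ℕ → ℕ := fun n =>
  if n = 0 then 0
  else f n - (if n ∈ Rset f then 1 else 0) + (if n + 1 ∈ Rset f then 1 else 0)

/-- The promotion operator `α`. -/
def aB (f : ℕ → ℕ) : ℕ → ℕ := fun n =>
  if n = 0 then 0
  else f n - (if n ∈ Lset f then 1 else 0) + (if n - 1 ∈ Lset f then 1 else 0)

/-- the shift `(f₂, f₃, …)`; on partitions this is `P ↦ P - 1`. -/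
def tailF (f : ℕ → ℕ) : ℕ → ℕ := fun n => if n = 0 then 0 else f (n + 1)

/-- The operator `β`: `β(f) = (f₁ + 1, α(f₂, f₃, …))`. -/
def bB (f : ℕ → ℕ) : ℕ → ℕ := fun n =>
  if n = 0 then 0 else if n = 1 then f 1 + 1 else aB (tailF f) (n - 1)

/-- the zero sequence (empty partition). -/
def zeroF : ℕ → ℕ := fun _ => 0

/-- `k` minimal with `∂^[k] f = 0`. -/
def chainK (f : ℕ → ℕ) : ℕ :=
  if h : ∃ m, dB^[m] f = zeroF then Nat.find h else 0

/-- The Burge code of `f`, as a list of letters; `false` = `a`, `true` = `b`.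
The `i`-th letter (0-indexed `i`) records whether `∂^[i] f ∈ B`, i.e. `1 ∈ R(∂^[i] f)`. -/
def burgeCode (f : ℕ → ℕ) : List Bool :=
  (List.range (chainK f + 1)).map fun i => if 1 ∈ Rset (dB^[i] f) then true else false

/-- descent set of a word: 1-indexed positions `i` with `ωᵢ = b`, `ω_{i+1} = a`. -/
def descSet (w : List Bool) : Set ℕ :=
  {i | 1 ≤ i ∧ w[i - 1]? = some true ∧ w[i]? = some false}

/-- the descent set of (the Burge code of) a partition. -/
def DesSet (f : ℕ → ℕ) : Set ℕ := descSet (burgeCode f)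

/-- `Des(P)` regarded as a partition, via its frequency sequence. -/
def desFreq (f : ℕ → ℕ) : ℕ → ℕ := fun i => if i ∈ DesSet f then 1 else 0

/-- the 2-measure as the maximal size of a subset of the support without
consecutive pairs. -/
def twoMeasure (f : ℕ → ℕ) : ℕ :=
  sSup {n | ∃ T : Finset ℕ, (↑T : Set ℕ) ⊆ suppF f ∧ (∀ x ∈ T, x + 1 ∉ T) ∧ T.card = n}

/-- evaluation at `i`: `ν_i(f) = i f_i + (i+1) f_{i+1} + 2 ∑_{j>i+1} f_j`, with `ν₀ = ν₁`. -/
def nuI (f : ℕ → ℕ) (i : ℕ) : ℕ :=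
  (max i 1) * f (max i 1) + (max i 1 + 1) * f (max i 1 + 1)
    + 2 * ∑ᶠ j ∈ {j : ℕ | max i 1 + 1 < j}, f j

/-- annihilation at `i`: `ρ_i(f) = (f₁, …, f_{i-1}, f_{i+2}, f_{i+3}, …)`, with `ρ₀ = ρ₁`. -/
def rhoI (f : ℕ → ℕ) (i : ℕ) : ℕ → ℕ := fun n =>
  if n = 0 then 0 else if n < max i 1 then f n else f (n + 2)

/-- `i ≥ 1` is right admissible in `f`. -/
def RightAdm (f : ℕ → ℕ) (i : ℕ) : Prop :=
  1 ≤ i ∧ 0 < f i ∧ (0 < f (i + 1) ∨ (f (i - 1) = 0 ∧ f (i + 1) = 0))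

/-- `i ≥ 0` is left admissible in `f`. -/
def LeftAdm (f : ℕ → ℕ) (i : ℕ) : Prop :=
  0 < f (i + 1) ∧ (0 < f i ∨ (f i = 0 ∧ f (i + 2) = 0))

/-- `i` is a maximal index for `f`: `ν_i(f)` is nonzero and maximal. -/
def MaxIdx (f : ℕ → ℕ) (i : ℕ) : Prop :=
  nuI f i ≠ 0 ∧ ∀ j, nuI f j ≤ nuI f i

end

section Rset

variable {f : ℕ → ℕ}

lemma one_le_of_mem_Rset {q : ℕ} (hq : q ∈ Rset f) : 1 ≤ q := by
  obtain ⟨i, j, hs, hiq, -, -⟩ := hq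
  exact hs.1.trans hiq

lemma ne_zero_of_mem_Rset {q : ℕ} (hq : q ∈ Rset f) : f q ≠ 0 := by
  obtain ⟨i, j, hs, hiq, hqj, -⟩ := hq
  exact hs.2.2.1 q hiq hqj

lemma Rset_subset_support : Rset f ⊆ Function.support f := fun _ => ne_zero_of_mem_Rset

lemma IsSpread.right_eq {i j i' j' q : ℕ} (h : IsSpread f i j) (h' : IsSpread f i' j')
    (hiq : i ≤ q) (hqj : q ≤ j) (hi'q : i' ≤ q) (hqj' : q ≤ j') : j = j' := by
  by_contra hne
  rcases Nat.lt_or_gt_of_ne hne with hlt | hgt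
  · exact h'.2.2.1 (j + 1) (by omega) (by omega) h.2.2.2.2
  · exact h.2.2.1 (j' + 1) (by omega) (by omega) h'.2.2.2.2

lemma exists_isSpread (hf : (Function.support f).Finite) {q : ℕ} (hq : 1 ≤ q) (hfq : f q ≠ 0) :
    ∃ i j, IsSpread f i j ∧ i ≤ q ∧ q ≤ j := by
  have hleft : ∃ i, 1 ≤ i ∧ i ≤ q ∧ ∀ k, i ≤ k → k ≤ q → f k ≠ 0 :=
    ⟨q, hq, le_rfl, fun k hk hk' => by rwa [le_antisymm hk' hk]⟩
  have hright : ∃ j, q ≤ j ∧ f (j + 1) = 0 := by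
    obtain ⟨M, hM⟩ := hf.bddAbove
    refine ⟨max q M, le_max_left _ _, ?_⟩
    by_contra h
    exact absurd (hM h) (by omega)
  obtain ⟨hi1, hiq, hi⟩ := Nat.find_spec hleft
  obtain ⟨hqj, hj⟩ := Nat.find_spec hright
  refine ⟨Nat.find hleft, Nat.find hright, ⟨hi1, hiq.trans hqj, ?_, ?_, hj⟩, hiq, hqj⟩
  · intro k hik hkj
    rcases le_or_gt k q with hkq | hqk
    · exact hi k hik hkq
    · have hmin := Nat.find_min hright (show k - 1 < Nat.find hright by omega)
      rw [show k - 1 + 1 = k by omega] at hmin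
      exact fun hk => hmin ⟨by omega, hk⟩
  · by_contra! h
    refine Nat.find_min hleft (show Nat.find hleft - 1 < Nat.find hleft by omega)
      ⟨by omega, by omega, fun k hk hkq => ?_⟩
    rcases hk.eq_or_lt with hk | hk
    · rw [← hk]; exact h.2
    · exact hi k (by omega) hkq

lemma mem_Rset_iff (hf : (Function.support f).Finite) {q : ℕ} :
    q ∈ Rset f ↔ 1 ≤ q ∧ f q ≠ 0 ∧ q + 1 ∉ Rset f := by
  constructor
  · rintro hq
    refine ⟨one_le_of_mem_Rset hq, ne_zero_of_mem_Rset hq, ?_⟩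
    obtain ⟨i, j, hs, hiq, hqj, hpar⟩ := hq
    rintro ⟨i', j', hs', hiq', hqj', hpar'⟩
    rcases hqj.eq_or_lt with rfl | hlt
    · exact hs'.2.2.1 (q + 1) hiq' hqj' hs.2.2.2.2
    · have := hs.right_eq hs' (q := q + 1) (by omega) hlt (by omega) hqj'
      omega
  · rintro ⟨hq, hfq, hq1⟩
    obtain ⟨i, j, hs, hiq, hqj⟩ := exists_isSpread hf hq hfq
    refine ⟨i, j, hs, hiq, hqj, ?_⟩
    by_contra hpar
    exact hq1 ⟨i, j, hs, by omega, by omega, by omega⟩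

lemma Rset_finite (hf : (Function.support f).Finite) : (Rset f).Finite :=
  hf.subset Rset_subset_support

/-- The largest part of a nonzero `f` lies in `R(f)`. -/
lemma Rset_nonempty (hf : IsFreq f) (hne : f ≠ zeroF) : (Rset f).Nonempty := by
  have hsupp : hf.2.toFinset.Nonempty := by
    obtain ⟨n, hn⟩ := Function.ne_iff.1 hne
    exact ⟨n, by simpa [zeroF] using hn⟩
  set q := hf.2.toFinset.max' hsupp
  have hfq : f q ≠ 0 := by simpa using hf.2.toFinset.max'_mem hsupp
  have hfq1 : f (q + 1) = 0 := by
    by_contra h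
    exact absurd (hf.2.toFinset.le_max' (q + 1) (by simpa using h)) (by omega)
  refine ⟨q, (mem_Rset_iff hf.2).2 ⟨?_, hfq, fun h => ne_zero_of_mem_Rset h hfq1⟩⟩
  exact Nat.one_le_iff_ne_zero.2 fun h => hfq (h ▸ hf.1)

lemma Rset_zeroF : Rset zeroF = ∅ :=
  Set.eq_empty_of_forall_notMem fun _ hq => ne_zero_of_mem_Rset hq rfl

end Rset

lemma finsum_eq_sum_range {M : Type*} [AddCommMonoid M] {g : ℕ → M} {N : ℕ}
    (hN : ∀ n, N ≤ n → g n = 0) : ∑ᶠ n, g n = ∑ n ∈ Finset.range N, g n := by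
  refine finsum_eq_sum_of_support_subset g fun n hn => ?_
  by_contra h
  exact hn (hN n (by simpa using h))

section Demotion

variable {f : ℕ → ℕ}

lemma exists_forall_ge_eq_zero (hf : (Function.support f).Finite) :
    ∃ N, ∀ n, N ≤ n → f n = 0 := by
  obtain ⟨M, hM⟩ := hf.bddAbove
  refine ⟨M + 1, fun n hn => ?_⟩
  by_contra h
  exact absurd (hM h) (by omega)

lemma not_mem_Rset_of_forall_ge {N : ℕ} (hN : ∀ n, N ≤ n → f n = 0) {n : ℕ} (hn : N ≤ n) :
    n ∉ Rset f := fun h => ne_zero_of_mem_Rset h (hN n hn)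

lemma dB_add_ite {n : ℕ} (hn : n ≠ 0) :
    dB f n + (if n ∈ Rset f then 1 else 0) = f n + (if n + 1 ∈ Rset f then 1 else 0) := by
  have hle : (if n ∈ Rset f then 1 else 0) ≤ f n := by
    split_ifs with h
    · exact Nat.one_le_iff_ne_zero.2 (ne_zero_of_mem_Rset h)
    · exact Nat.zero_le _
  simp only [dB, hn, if_false]
  omega

lemma dB_eq_zero_of_forall_ge {N : ℕ} (hN : ∀ n, N ≤ n → f n = 0) {n : ℕ} (hn : N ≤ n) :
    dB f n = 0 := by
  rcases eq_or_ne n 0 with rfl | hn0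
  · rfl
  have := dB_add_ite (f := f) hn0
  rw [if_neg (not_mem_Rset_of_forall_ge hN hn),
    if_neg (not_mem_Rset_of_forall_ge hN (n := n + 1) (by omega)), hN n hn] at this
  omega

lemma isFreq_dB (hf : IsFreq f) : IsFreq (dB f) := by
  obtain ⟨N, hN⟩ := exists_forall_ge_eq_zero hf.2
  refine ⟨rfl, (Set.finite_lt_nat N).subset fun n hn => ?_⟩
  by_contra h
  exact hn (dB_eq_zero_of_forall_ge hN (not_lt.1 h))

lemma mem_Rset_dB_of_succ_mem_sdiff (hf : IsFreq f) {q : ℕ} (hq : 1 ≤ q)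
    (h : q + 1 ∈ Rset f \ Rset (dB f)) : q ∈ Rset (dB f) \ Rset f := by
  have hnot : q ∉ Rset f := fun hr => ((mem_Rset_iff hf.2).1 hr).2.2 h.1
  refine ⟨(mem_Rset_iff (isFreq_dB hf).2).2 ⟨hq, ?_, h.2⟩, hnot⟩
  have := dB_add_ite (f := f) (n := q) (by omega)
  rw [if_neg hnot, if_pos h.1] at this
  omega

lemma succ_mem_Rset_sdiff_of_mem_dB (hf : IsFreq f) {q : ℕ}
    (h : q ∈ Rset (dB f) \ Rset f) : q + 1 ∈ Rset f \ Rset (dB f) := by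
  obtain ⟨hq, hdq, hq1⟩ := (mem_Rset_iff (isFreq_dB hf).2).1 h.1
  refine ⟨?_, hq1⟩
  by_contra hr
  have := dB_add_ite (f := f) (n := q) (by omega)
  rw [if_neg h.2, if_neg hr] at this
  exact h.2 ((mem_Rset_iff hf.2).2 ⟨hq, by omega, hr⟩)

lemma image_succ_Rset_dB_sdiff (hf : IsFreq f) :
    (· + 1) '' (Rset (dB f) \ Rset f) = (Rset f \ Rset (dB f)) \ {1} := by
  ext p
  constructor
  · rintro ⟨q, hq, rfl⟩
    have := one_le_of_mem_Rset hq.1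
    exact ⟨succ_mem_Rset_sdiff_of_mem_dB hf hq, by simp; omega⟩
  · rintro ⟨hp, hp1⟩
    have := one_le_of_mem_Rset hp.1
    have hp1 : p ≠ 1 := hp1
    refine ⟨p - 1, mem_Rset_dB_of_succ_mem_sdiff hf (by omega) ?_, by simp; omega⟩
    rwa [Nat.sub_add_cancel (by omega)]

lemma mu2_eq_mu2_dB_add (hf : IsFreq f) :
    mu2 f = mu2 (dB f) + if 1 ∈ Rset f ∧ 1 ∉ Rset (dB f) then 1 else 0 := by
  have hR := Rset_finite hf.2
  have hR' := Rset_finite (isFreq_dB hf).2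
  have hsplit := Set.ncard_inter_add_ncard_sdiff_eq_ncard (Rset f) (Rset (dB f)) hR
  have hsplit' := Set.ncard_inter_add_ncard_sdiff_eq_ncard (Rset (dB f)) (Rset f) hR'
  have himage := congrArg Set.ncard (image_succ_Rset_dB_sdiff hf)
  rw [Set.ncard_image_of_injective _ (add_left_injective 1)] at himage
  rw [mu2, mu2, ← hsplit, ← hsplit', Set.inter_comm, himage]
  split_ifs with h1
  · have := Set.ncard_sdiff_singleton_add_one (s := Rset f \ Rset (dB f)) h1 hR.sdiff
    omega
  · rw [Set.sdiff_singleton_eq_self (s := Rset f \ Rset (dB f)) h1, add_zero]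

lemma sum_range_ite_mem_Rset {N : ℕ} (hN : ∀ n, N ≤ n → f n = 0) :
    ∑ n ∈ Finset.range N, (if n ∈ Rset f then 1 else 0) = mu2 f := by
  rw [Finset.sum_boole, Nat.cast_id, mu2, ← Set.ncard_coe_finset]
  congr 1
  ext n
  simp only [Finset.coe_filter, Finset.mem_range, Set.mem_ofPred_eq, and_iff_right_iff_imp]
  exact fun h => not_le.1 fun hn => not_mem_Rset_of_forall_ge hN hn h

/-- Each part `q ∈ R(f)` is lowered to `q - 1`; the boundary term is the parts equal to `1`,
which disappear. -/
lemma sum_range_mul_dB_add (hf0 : f 0 = 0) {N : ℕ} (hN : ∀ n, N ≤ n → f n = 0) (w : ℕ → ℕ) :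
    ∑ n ∈ Finset.range N, w n * dB f n + ∑ n ∈ Finset.range N, w n * (if n ∈ Rset f then 1 else 0)
        + w 0 * (if 1 ∈ Rset f then 1 else 0)
      = ∑ n ∈ Finset.range N, w n * f n
        + ∑ n ∈ Finset.range N, w (n - 1) * (if n ∈ Rset f then 1 else 0) := by
  have h0 : (0 : ℕ) ∉ Rset f := fun h => by simpa using one_le_of_mem_Rset h
  have hpoint : ∀ n, w n * dB f n + w n * (if n ∈ Rset f then 1 else 0)
      + (if n = 0 then w 0 * (if 1 ∈ Rset f then 1 else 0) else 0)
      = w n * f n + w n * (if n + 1 ∈ Rset f then 1 else 0) := by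
    rintro (_ | n)
    · simp [dB, hf0, h0]
    · rw [if_neg n.succ_ne_zero, add_zero, ← mul_add, ← mul_add, dB_add_ite n.succ_ne_zero]
  have hboundary : ∑ n ∈ Finset.range N, (if n = 0 then w 0 * (if 1 ∈ Rset f then 1 else 0) else 0)
      = w 0 * (if 1 ∈ Rset f then 1 else 0) := by
    rw [Finset.sum_ite_eq' (Finset.range N) 0]
    rcases N with _ | N
    · rw [if_neg (by simp), if_neg (not_mem_Rset_of_forall_ge hN (Nat.zero_le 1)), mul_zero]
    · rw [if_pos (by simp)]
  have hshift : ∑ n ∈ Finset.range N, w n * (if n + 1 ∈ Rset f then 1 else 0)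
      = ∑ n ∈ Finset.range N, w (n - 1) * (if n ∈ Rset f then 1 else 0) := by
    have h1 := Finset.sum_range_succ' (fun n => w (n - 1) * (if n ∈ Rset f then 1 else 0)) N
    rw [Finset.sum_range_succ, if_neg (not_mem_Rset_of_forall_ge hN le_rfl), if_neg h0] at h1
    simpa using h1.symm
  rw [← hboundary, ← Finset.sum_add_distrib, ← Finset.sum_add_distrib, Finset.sum_congr rfl
    fun n _ => hpoint n, Finset.sum_add_distrib, hshift]

lemma flen_eq_flen_dB_add (hf : IsFreq f) :
    flen f = flen (dB f) + if 1 ∈ Rset f then 1 else 0 := by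
  obtain ⟨N, hN⟩ := exists_forall_ge_eq_zero hf.2
  have h := sum_range_mul_dB_add hf.1 hN fun _ => 1
  simp only [one_mul] at h
  rw [flen, flen, finsum_eq_sum_range hN, finsum_eq_sum_range fun n => dB_eq_zero_of_forall_ge hN]
  omega

lemma fsize_eq_fsize_dB_add (hf : IsFreq f) : fsize f = fsize (dB f) + mu2 f := by
  obtain ⟨N, hN⟩ := exists_forall_ge_eq_zero hf.2
  have h := sum_range_mul_dB_add hf.1 hN id
  have hpred : ∑ n ∈ Finset.range N, (n - 1) * (if n ∈ Rset f then 1 else 0) + mu2 f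
      = ∑ n ∈ Finset.range N, n * (if n ∈ Rset f then 1 else 0) := by
    rw [← sum_range_ite_mem_Rset hN, ← Finset.sum_add_distrib]
    refine Finset.sum_congr rfl fun n _ => ?_
    split_ifs with hn
    · have := one_le_of_mem_Rset hn
      simp only [mul_one]
      omega
    · simp
  simp only [id, zero_mul, add_zero] at h
  rw [fsize, fsize, finsum_eq_sum_range (N := N) fun n hn => by simp [hN n hn],
    finsum_eq_sum_range (N := N) fun n hn => by simp [dB_eq_zero_of_forall_ge hN hn]]
  omega

lemma mu2_pos (hf : IsFreq f) (hne : f ≠ zeroF) : 0 < mu2 f :=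
  (Set.ncard_pos (Rset_finite hf.2)).2 (Rset_nonempty hf hne)

end Demotion

section BurgeCode

variable {f : ℕ → ℕ}

/-- Well founded because `∂` lowers `|f|` by `μ₂(f) > 0`. -/
theorem IsFreq.induction_dB {P : (ℕ → ℕ) → Prop} (zero : P zeroF)
    (step : ∀ g, IsFreq g → g ≠ zeroF → P (dB g) → P g) (hf : IsFreq f) : P f := by
  induction h : fsize f using Nat.strong_induction_on generalizing f with
  | _ n ih =>
    by_cases hne : f = zeroF
    · exact hne ▸ zero
    refine step f hf hne (ih _ ?_ (isFreq_dB hf) rfl)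
    have := fsize_eq_fsize_dB_add hf
    have := mu2_pos hf hne
    omega

lemma exists_iterate_dB_eq_zeroF (hf : IsFreq f) : ∃ m, dB^[m] f = zeroF :=
  hf.induction_dB (P := fun g => ∃ m, dB^[m] g = zeroF) ⟨0, rfl⟩ fun _ _ _ ⟨m, hm⟩ => ⟨m + 1, hm⟩

lemma chainK_eq_chainK_dB_add_one (hf : IsFreq f) (hne : f ≠ zeroF) :
    chainK f = chainK (dB f) + 1 := by
  have h := exists_iterate_dB_eq_zeroF hf
  have h' := exists_iterate_dB_eq_zeroF (isFreq_dB hf)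
  rw [chainK, chainK, dif_pos h, dif_pos h']
  exact Nat.find_comp_succ h h' hne

lemma burgeCode_eq_cons (hf : IsFreq f) (hne : f ≠ zeroF) :
    burgeCode f = decide (1 ∈ Rset f) :: burgeCode (dB f) := by
  rw [burgeCode, chainK_eq_chainK_dB_add_one hf hne, List.range_succ_eq_map, List.map_cons,
    List.map_map]
  simp only [Function.iterate_zero_apply, Bool.if_false_right, Bool.and_true]
  rfl

lemma burgeCode_zeroF : burgeCode zeroF = [false] := by
  have h : ∃ m, dB^[m] zeroF = zeroF := ⟨0, rfl⟩
  have hk : chainK zeroF = 0 := by rw [chainK, dif_pos h, Nat.find_eq_zero h]; rfl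
  simp [burgeCode, hk, Rset_zeroF]

lemma getElem?_zero_burgeCode (g : ℕ → ℕ) : (burgeCode g)[0]? = some (decide (1 ∈ Rset g)) := by
  simp [burgeCode]

end BurgeCode

section Descents

lemma descSet_cons (x : Bool) (w : List Bool) :
    descSet (x :: w) = (· + 1) '' descSet w ∪
      (if x = true ∧ w[0]? = some false then {1} else ∅) := by
  ext i
  rcases i with _ | _ | i
  · simp [descSet]
  · split_ifs with h <;> simp [descSet] <;> tauto
  · split_ifs <;> simp [descSet]

lemma finite_descSet (w : List Bool) : (descSet w).Finite :=
  (Set.finite_le_nat w.length).subset fun _ ⟨_, _, h⟩ =>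
    (List.getElem?_eq_some_iff.1 h).1.le

lemma disjoint_descSet_cons (x : Bool) (w : List Bool) :
    Disjoint ((· + 1) '' descSet w) (if x = true ∧ w[0]? = some false then {1} else ∅) := by
  rw [Set.disjoint_left]
  rintro _ ⟨i, hi, rfl⟩ h
  have : 1 ≤ i := hi.1
  split_ifs at h
  · simp at h; omega
  · exact h

lemma ncard_descSet_cons (x : Bool) (w : List Bool) :
    (descSet (x :: w)).ncard
      = (descSet w).ncard + if x = true ∧ w[0]? = some false then 1 else 0 := by
  rw [descSet_cons, Set.ncard_union_eq (disjoint_descSet_cons x w) ((finite_descSet w).image _)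
    (by split_ifs <;> simp), Set.ncard_image_of_injective _ (add_left_injective 1)]
  split_ifs <;> simp

lemma finsum_mem_descSet_cons (x : Bool) (w : List Bool) :
    ∑ᶠ i ∈ descSet (x :: w), i
      = ∑ᶠ i ∈ descSet w, i + (descSet w).ncard
        + if x = true ∧ w[0]? = some false then 1 else 0 := by
  have hfin := finite_descSet w
  have hshift : ∑ᶠ i ∈ (· + 1) '' descSet w, i = ∑ᶠ i ∈ descSet w, i + (descSet w).ncard := by
    rw [finsum_mem_image (add_left_injective 1).injOn, finsum_mem_add_distrib hfin,
      finsum_one]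
  rw [descSet_cons, finsum_mem_union (disjoint_descSet_cons x w) (hfin.image _)
    (by split_ifs <;> simp), hshift]
  split_ifs <;> simp

lemma descSet_singleton_false : descSet [false] = ∅ := by
  have hnil : descSet [] = ∅ := by ext; simp [descSet]
  simp [descSet_cons, hnil]

end Descents

section Statistics

variable {f : ℕ → ℕ}

lemma flen_eq_count_burgeCode (hf : IsFreq f) : flen f = (burgeCode f).count true := by
  refine IsFreq.induction_dB (P := fun g => flen g = (burgeCode g).count true) ?_
    (fun g hg hne ih => ?_) hf
  · simp [burgeCode_zeroF, flen, zeroF]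
  · rw [flen_eq_flen_dB_add hg, ih, burgeCode_eq_cons hg hne, List.count_cons]
    simp

lemma mu2_eq_ncard_descSet_burgeCode (hf : IsFreq f) :
    mu2 f = (descSet (burgeCode f)).ncard := by
  refine IsFreq.induction_dB (P := fun g => mu2 g = (descSet (burgeCode g)).ncard) ?_
    (fun g hg hne ih => ?_) hf
  · simp [burgeCode_zeroF, mu2, Rset_zeroF, descSet_singleton_false]
  · rw [mu2_eq_mu2_dB_add hg, ih, burgeCode_eq_cons hg hne, ncard_descSet_cons]
    simp [getElem?_zero_burgeCode]

lemma fsize_eq_finsum_mem_descSet_burgeCode (hf : IsFreq f) :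
    fsize f = ∑ᶠ i ∈ descSet (burgeCode f), i := by
  refine IsFreq.induction_dB (P := fun g => fsize g = ∑ᶠ i ∈ descSet (burgeCode g), i) ?_
    (fun g hg hne ih => ?_) hf
  · simp [burgeCode_zeroF, fsize, zeroF, descSet_singleton_false]
  · rw [fsize_eq_fsize_dB_add hg, ih, mu2_eq_mu2_dB_add hg,
      mu2_eq_ncard_descSet_burgeCode (isFreq_dB hg), burgeCode_eq_cons hg hne,
      finsum_mem_descSet_cons]
    simp [getElem?_zero_burgeCode, add_assoc]

end Statistics

/-- with `ω = Ω(f)`: `ℓ(f)` is the number of `b`'s in `ω`;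
`|f| = maj(ω)`; and `μ₂(f) = des(ω)`, the number of occurrences of `ba`. -/
theorem stmt10 (f : ℕ → ℕ) (hf : IsFreq f) :
    flen f = (burgeCode f).count true ∧
    fsize f = ∑ᶠ i ∈ descSet (burgeCode f), i ∧
    mu2 f = (descSet (burgeCode f)).ncard :=
  ⟨flen_eq_count_burgeCode hf, fsize_eq_finsum_mem_descSet_burgeCode hf,
    mu2_eq_ncard_descSet_burgeCode hf⟩
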